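/- Let 0 ≤ k < 1, let 𝔻 ⊂ ℂ be the open unit disk, and let ν : 𝔻 → ℂ be measurable with |ν(z)| ≤ k for almost every z. Suppose there is a measurable set E ⊆ 𝔻 with ν(z) = k for almost every z ∈ E, and let m denote the Lebesgue measure of 𝔻 ∖ E. Then (1/π)·∫_𝔻 |1 − ν|²/(1 − |ν|²) dA ≤ (1 − k)/(1 + k) + ((1 + k)/(1 − k))·(m/π). -/

import Mathlib

open MeasureTheory

/-- The key integral estimate: if `|ν| ≤ k` a.e. on the unit disk and `ν = k`
a.e. on a measurable set `E ⊆ 𝔻` whose complement in `𝔻` has measure `m`, then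
`(1/π)∫_𝔻 |1 − ν|²/(1 − |ν|²) ≤ (1 − k)/(1 + k) + ((1 + k)/(1 − k))·(m/π)`. -/
theorem reich_strebel_integral_estimate (k : ℝ) (hk0 : 0 ≤ k) (hk1 : k < 1)
    (ν : ℂ → ℂ) (hν : Measurable ν)
    (E : Set ℂ) (hE : MeasurableSet E) (hE𝔻 : E ⊆ Metric.ball (0 : ℂ) 1)
    (hbound : ∀ᵐ z ∂(volume.restrict (Metric.ball (0 : ℂ) 1)), ‖ν z‖ ≤ k)
    (hEk : ∀ᵐ z ∂(volume.restrict E), ν z = (k : ℂ)) :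
    (1 / Real.pi) *
        ∫ z in Metric.ball (0 : ℂ) 1,
          (‖1 - ν z‖) ^ 2 / (1 - (‖ν z‖) ^ 2)
      ≤ (1 - k) / (1 + k)
          + ((1 + k) / (1 - k)) *
              ((volume (Metric.ball (0 : ℂ) 1 \ E)).toReal / Real.pi) := by
  set D := Metric.ball (0 : ℂ) 1 with hD
  set f : ℂ → ℝ := fun z => (‖1 - ν z‖) ^ 2 / (1 - (‖ν z‖) ^ 2)
    with hf
  have h1k : (0:ℝ) < 1 - k := by linarith
  have h1k' : (0:ℝ) < 1 + k := by linarith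
  have hden : (0:ℝ) < 1 - k ^ 2 := by nlinarith
  set c1 : ℝ := (1 - k) / (1 + k) with hc1
  set c2 : ℝ := (1 + k) / (1 - k) with hc2
  have hc1pos : 0 < c1 := by positivity
  have hc2pos : 0 < c2 := by positivity
  have hπ : (0:ℝ) < Real.pi := Real.pi_pos
  have habs_meas : Measurable (fun x : ℂ => ‖x‖) := continuous_norm.measurable
  have hf_meas : Measurable f := by
    apply Measurable.div
    · exact ((habs_meas.comp ((measurable_const.sub hν))).pow_const 2)
    · exact measurable_const.sub ((habs_meas.comp hν).pow_const 2)
  -- pointwise bound where |ν z| ≤ k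
  have key : ∀ z : ℂ, ‖ν z‖ ≤ k → 0 ≤ f z ∧ f z ≤ c2 := by
    intro z hz
    have habs : (0:ℝ) ≤ ‖ν z‖ := norm_nonneg _
    have hdenz : 1 - k ^ 2 ≤ 1 - (‖ν z‖) ^ 2 := by nlinarith
    have hnum : ‖1 - ν z‖ ≤ 1 + k := by
      calc ‖1 - ν z‖ = ‖(1:ℂ) - ν z‖ := rfl
        _ ≤ ‖(1:ℂ)‖ + ‖ν z‖ := norm_sub_le _ _
        _ = 1 + ‖ν z‖ := by simp
        _ ≤ 1 + k := by linarith
    have hnum2 : (‖1 - ν z‖) ^ 2 ≤ (1 + k) ^ 2 := by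
      have := norm_nonneg (1 - ν z); nlinarith
    constructor
    · apply div_nonneg (by positivity); linarith
    · calc f z ≤ (1 + k) ^ 2 / (1 - k ^ 2) :=
            div_le_div₀ (by positivity) hnum2 hden hdenz
        _ = c2 := by rw [hc2]; field_simp; ring
  have hbD : ∀ᵐ z ∂(volume.restrict D), 0 ≤ f z ∧ f z ≤ c2 := by
    filter_upwards [hbound] with z hz using key z hz
  have hDfin : volume D < ⊤ := by
    rw [hD, Complex.volume_ball]; exact ENNReal.mul_lt_top (by simp) (by simp)
  have hint : IntegrableOn f D := by
    apply Integrable.mono' (g := fun _ => c2)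
    · exact integrableOn_const hDfin.ne
    · exact hf_meas.aestronglyMeasurable
    · filter_upwards [hbD] with z hz
      rw [Real.norm_eq_abs, abs_of_nonneg hz.1]; exact hz.2
  -- on E, f = c1 a.e.
  have hE_eq : ∫ z in E, f z = c1 * (volume E).toReal := by
    have : ∫ z in E, f z = ∫ _ in E, c1 := by
      apply setIntegral_congr_ae hE
      filter_upwards [(ae_restrict_iff' hE).mp hEk] with z hz hzE
      have hz := hz hzE
      rw [hf]
      simp only [hz]
      have h1 : (1:ℂ) - (k:ℂ) = ((1 - k : ℝ) : ℂ) := by push_cast; ring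
      rw [h1, Complex.norm_real, Complex.norm_real, Real.norm_eq_abs, Real.norm_eq_abs, abs_of_nonneg hk0,
        abs_of_nonneg (le_of_lt h1k), hc1]
      field_simp
      ring
    rw [this, setIntegral_const, smul_eq_mul, mul_comm]; rfl
  have hEfin : volume E < ⊤ := lt_of_le_of_lt (measure_mono hE𝔻) hDfin
  have hEvol : (volume E).toReal ≤ Real.pi := by
    have h1 : volume E ≤ volume D := measure_mono hE𝔻
    have h2 : volume D = ENNReal.ofReal Real.pi := by
      rw [hD, Complex.volume_ball, ← NNReal.coe_real_pi, ENNReal.ofReal_coe_nnreal]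
      simp
    rw [h2] at h1
    calc (volume E).toReal ≤ (ENNReal.ofReal Real.pi).toReal :=
        ENNReal.toReal_mono (by simp) h1
      _ = Real.pi := ENNReal.toReal_ofReal Real.pi_nonneg
  -- bound on the complement
  have hcomp : ∫ z in D \ E, f z ≤ c2 * (volume (D \ E)).toReal := by
    have hmeasC : volume (D \ E) < ⊤ := lt_of_le_of_lt (measure_mono Set.diff_subset) hDfin
    have hb : ∀ᵐ z ∂(volume.restrict (D \ E)), f z ≤ c2 := by
      have := ae_restrict_of_ae_restrict_of_subset (Set.diff_subset : D \ E ⊆ D) hbD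
      filter_upwards [this] with z hz using hz.2
    calc ∫ z in D \ E, f z ≤ ∫ _ in D \ E, c2 := by
          apply setIntegral_mono_ae_restrict (hint.mono_set Set.diff_subset)
            (integrableOn_const hmeasC.ne) hb
      _ = c2 * (volume (D \ E)).toReal := by
          rw [setIntegral_const, smul_eq_mul, mul_comm]; rfl
  -- split the integral
  have hDE : MeasurableSet (D \ E) := by
    exact MeasurableSet.diff (by rw [hD]; exact measurableSet_ball) hE
  have hsplit : ∫ z in D, f z = (∫ z in E, f z) + ∫ z in D \ E, f z := by
    have h := setIntegral_union (f := f) (μ := volume) Set.disjoint_sdiff_right hDE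
      (hint.mono_set hE𝔻) (hint.mono_set Set.diff_subset)
    rwa [Set.union_diff_cancel hE𝔻] at h
  have hmain : ∫ z in D, f z ≤ c1 * Real.pi + c2 * (volume (D \ E)).toReal := by
    rw [hsplit, hE_eq]
    have : c1 * (volume E).toReal ≤ c1 * Real.pi :=
      mul_le_mul_of_nonneg_left hEvol (le_of_lt hc1pos)
    linarith
  have : (1 / Real.pi) * ∫ z in D, f z ≤
      (1 / Real.pi) * (c1 * Real.pi + c2 * (volume (D \ E)).toReal) :=
    mul_le_mul_of_nonneg_left hmain (by positivity)
  calc (1 / Real.pi) * ∫ z in D, f z ≤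
      (1 / Real.pi) * (c1 * Real.pi + c2 * (volume (D \ E)).toReal) := this
    _ = c1 + c2 * ((volume (D \ E)).toReal / Real.pi) := by field_simp
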